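/- Let F : ℝ₊ → ℝ with F(1) = 0, satisfying the composition law F(x·y) + F(x/y) = 2·F(x)·F(y) + 2·F(x) + 2·F(y) for all x,y > 0, and with log-curvature limit 2·F(exp t)/t² → 1 as t → 0. Then F(x) = (x + 1/x)/2 - 1 for all x > 0. -/

import Mathlib

open Filter Topology

private lemma sinh_div_lim : Tendsto (fun s : ℝ => Real.sinh s / s) (𝓝[≠] 0) (𝓝 1) := by
  have h := (Real.hasDerivAt_sinh 0)
  rw [hasDerivAt_iff_tendsto_slope] at h
  simp only [Real.cosh_zero] at h
  refine h.congr fun s => ?_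
  simp [slope_def_field]

private lemma cosh_lim :
    Tendsto (fun s : ℝ => 2 * (Real.cosh s - 1) / s ^ 2) (𝓝[≠] 0) (𝓝 1) := by
  have hhalf : Tendsto (fun s : ℝ => s / 2) (𝓝[≠] (0:ℝ)) (𝓝[≠] (0:ℝ)) := by
    rw [tendsto_nhdsWithin_iff]
    constructor
    · have hcont : Tendsto (fun s : ℝ => s / 2) (𝓝 (0:ℝ)) (𝓝 (0:ℝ)) := by
        have := (continuous_id.div_const (2:ℝ)).tendsto (0:ℝ)
        simpa using this
      exact hcont.mono_left nhdsWithin_le_nhds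
    · exact eventually_mem_nhdsWithin.mono fun s hs => by
        simp only [Set.mem_compl_iff, Set.mem_singleton_iff] at hs ⊢
        exact div_ne_zero hs two_ne_zero
  have hq := sinh_div_lim.comp hhalf
  have hm := hq.mul hq
  norm_num at hm
  refine hm.congr' ?_
  filter_upwards [eventually_mem_nhdsWithin] with s hs
  simp only [Set.mem_compl_iff, Set.mem_singleton_iff] at hs
  have hc : Real.cosh s = 2 * Real.sinh (s / 2) ^ 2 + 1 := by
    have h2 : Real.cosh (2 * (s / 2)) = Real.cosh (s/2) ^ 2 + Real.sinh (s/2) ^ 2 :=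
      Real.cosh_two_mul _
    rw [show 2 * (s/2) = s by ring] at h2
    rw [h2, Real.cosh_sq]; ring
  show Real.sinh (s/2) / (s/2) * (Real.sinh (s/2) / (s/2)) = 2 * (Real.cosh s - 1) / s ^ 2
  rw [hc]
  field_simp
  ring

private lemma dAlembert_eq_cosh (g : ℝ → ℝ) (h0 : g 0 = 1)
    (hD : ∀ s t : ℝ, g (s + t) + g (s - t) = 2 * g s * g t)
    (hL : Tendsto (fun s : ℝ => 2 * (g s - 1) / s ^ 2) (𝓝[≠] 0) (𝓝 1)) :
    ∀ t : ℝ, g t = Real.cosh t := by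
  -- doubling law
  have hdbl : ∀ s : ℝ, g (2 * s) = 2 * (g s) ^ 2 - 1 := by
    intro s
    have h := hD s s
    rw [sub_self, h0] at h
    rw [two_mul]
    nlinarith [h]
  -- difference recurrence
  have hrec : ∀ s : ℝ, g (2 * s) - Real.cosh (2 * s)
      = 2 * (g s + Real.cosh s) * (g s - Real.cosh s) := by
    intro s
    rw [hdbl, Real.cosh_two_mul,
      show Real.sinh s ^ 2 = Real.cosh s ^ 2 - 1 by linarith [Real.cosh_sq s]]
    ring
  -- limit of the difference
  have hd0 : Tendsto (fun s : ℝ => (g s - Real.cosh s) / s ^ 2) (𝓝[≠] 0) (𝓝 0) := by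
    have h := (hL.sub cosh_lim).const_mul (1/2 : ℝ)
    norm_num at h
    refine h.congr fun s => ?_
    ring
  -- quadratic bounds near 0
  have hbound : ∃ δ > 0, ∀ s : ℝ, s ≠ 0 → |s| < δ →
      |g s - 1| ≤ s ^ 2 ∧ |Real.cosh s - 1| ≤ s ^ 2 := by
    rw [Metric.tendsto_nhdsWithin_nhds] at hL
    obtain ⟨δ₁, hδ₁, H₁⟩ := hL 1 one_pos
    have hLc := cosh_lim
    rw [Metric.tendsto_nhdsWithin_nhds] at hLc
    obtain ⟨δ₂, hδ₂, H₂⟩ := hLc 1 one_pos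
    refine ⟨min δ₁ δ₂, lt_min hδ₁ hδ₂, fun s hs hsδ => ?_⟩
    have hs2 : (0:ℝ) < s ^ 2 := by positivity
    have hmem : s ∈ ({0}ᶜ : Set ℝ) := hs
    have hds : dist s 0 = |s| := by simp [Real.dist_eq]
    have h₁ := H₁ hmem (by rw [hds]; exact hsδ.trans_le (min_le_left _ _))
    have h₂ := H₂ hmem (by rw [hds]; exact hsδ.trans_le (min_le_right _ _))
    rw [Real.dist_eq, abs_sub_lt_iff] at h₁ h₂
    constructor
    · have hub : 2 * (g s - 1) < 2 * s ^ 2 := by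
        have := (div_lt_iff₀ hs2).mp (by linarith [h₁.1] : 2 * (g s - 1) / s ^ 2 < 2)
        linarith
      have hlb : 0 < 2 * (g s - 1) / s ^ 2 := by linarith [h₁.2]
      have hlb' : 0 ≤ 2 * (g s - 1) := by
        by_contra hcon
        push_neg at hcon
        have : 2 * (g s - 1) / s ^ 2 < 0 := div_neg_of_neg_of_pos hcon hs2
        linarith
      rw [abs_le]; constructor <;> nlinarith
    · have hub : 2 * (Real.cosh s - 1) < 2 * s ^ 2 := by
        have := (div_lt_iff₀ hs2).mp (by linarith [h₂.1] : 2 * (Real.cosh s - 1) / s ^ 2 < 2)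
        linarith
      have hlb : 0 ≤ Real.cosh s - 1 := by linarith [Real.one_le_cosh s]
      rw [abs_le]; constructor <;> nlinarith
  obtain ⟨δ, hδ, hb⟩ := hbound
  intro t
  rcases eq_or_ne t 0 with rfl | ht
  · simp [h0]
  -- choose m with |t|/2^m < δ
  obtain ⟨m, hm⟩ : ∃ m : ℕ, |t| / 2 ^ m < δ := by
    obtain ⟨m, hm⟩ := pow_unbounded_of_one_lt (|t| / δ) (one_lt_two (α := ℝ))
    refine ⟨m, ?_⟩
    rw [div_lt_iff₀ (by positivity)]
    rw [div_lt_iff₀ hδ] at hm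
    linarith [hm]
  set u : ℝ := t / 2 ^ m with hu
  have hu0 : u ≠ 0 := div_ne_zero ht (by positivity)
  have huabs : |u| < δ := by
    rw [hu, abs_div, abs_pow, abs_two]
    exact hm
  have hukδ : ∀ n : ℕ, |u / 2 ^ n| < δ := by
    intro n
    rw [abs_div, abs_pow, abs_two]
    have h2n : (1:ℝ) ≤ 2 ^ n := one_le_pow₀ (by norm_num)
    exact lt_of_le_of_lt (div_le_self (abs_nonneg u) h2n) huabs
  have huk0 : ∀ n : ℕ, u / 2 ^ n ≠ 0 := fun n => div_ne_zero hu0 (by positivity)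
  -- single-step estimate
  have hstep : ∀ n : ℕ, |g (u / 2 ^ n) - Real.cosh (u / 2 ^ n)|
      ≤ 4 * Real.exp ((u / 2 ^ (n+1)) ^ 2)
        * |g (u / 2 ^ (n+1)) - Real.cosh (u / 2 ^ (n+1))| := by
    intro n
    set s := u / 2 ^ (n+1) with hs
    have h2 : 2 * s = u / 2 ^ n := by
      rw [hs, pow_succ]; field_simp
    rw [← h2, hrec, abs_mul]
    apply mul_le_mul_of_nonneg_right _ (abs_nonneg _)
    obtain ⟨hg1, hc1⟩ := hb s (huk0 (n+1)) (hukδ (n+1))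
    have habs : |2 * (g s + Real.cosh s)| ≤ 4 * (1 + s ^ 2) := by
      rw [abs_mul, abs_two]
      have : |g s + Real.cosh s| ≤ 2 + 2 * s ^ 2 := by
        have e1 : g s + Real.cosh s = (g s - 1) + (Real.cosh s - 1) + 2 := by ring
        rw [e1]
        calc |(g s - 1) + (Real.cosh s - 1) + 2|
            ≤ |g s - 1| + |Real.cosh s - 1| + |2| := by
              apply (abs_add_le _ _).trans; gcongr; exact abs_add_le _ _
          _ ≤ s ^ 2 + s ^ 2 + 2 := by rw [abs_two]; gcongr
          _ = 2 + 2 * s ^ 2 := by ring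
      linarith
    calc |2 * (g s + Real.cosh s)| ≤ 4 * (1 + s ^ 2) := habs
      _ ≤ 4 * Real.exp (s ^ 2) := by
          have := Real.add_one_le_exp (s ^ 2)
          linarith
  -- accumulated estimate
  have hacc : ∀ n : ℕ, |g u - Real.cosh u|
      ≤ 4 ^ n * Real.exp (u ^ 2 * (1 - (1/4 : ℝ) ^ n))
        * |g (u / 2 ^ n) - Real.cosh (u / 2 ^ n)| := by
    intro n
    induction n with
    | zero => simp
    | succ n ih =>
      have hsq : (u / 2 ^ (n+1)) ^ 2 = u ^ 2 * (1/4 : ℝ) ^ (n+1) := by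
        have h4 : ((2:ℝ) ^ (n+1)) ^ 2 = 4 ^ (n+1) := by
          rw [← pow_mul, mul_comm, pow_mul]; norm_num
        rw [div_pow, h4, one_div, inv_pow, ← div_eq_mul_inv]
      calc |g u - Real.cosh u|
          ≤ 4 ^ n * Real.exp (u ^ 2 * (1 - (1/4 : ℝ) ^ n))
            * |g (u / 2 ^ n) - Real.cosh (u / 2 ^ n)| := ih
        _ ≤ 4 ^ n * Real.exp (u ^ 2 * (1 - (1/4 : ℝ) ^ n))
            * (4 * Real.exp ((u / 2 ^ (n+1)) ^ 2)
              * |g (u / 2 ^ (n+1)) - Real.cosh (u / 2 ^ (n+1))|) := by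
            apply mul_le_mul_of_nonneg_left (hstep n) (by positivity)
        _ ≤ 4 ^ (n+1) * Real.exp (u ^ 2 * (1 - (1/4 : ℝ) ^ (n+1)))
            * |g (u / 2 ^ (n+1)) - Real.cosh (u / 2 ^ (n+1))| := by
            rw [hsq]
            have hexp : Real.exp (u ^ 2 * (1 - (1/4 : ℝ) ^ n))
                * Real.exp (u ^ 2 * (1/4 : ℝ) ^ (n+1))
                ≤ Real.exp (u ^ 2 * (1 - (1/4 : ℝ) ^ (n+1))) := by
              rw [← Real.exp_add]
              apply Real.exp_le_exp.mpr
              have h14 : (0:ℝ) ≤ (1/4 : ℝ) ^ (n+1) := by positivity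
              nlinarith [sq_nonneg u, pow_succ (1/4 : ℝ) n]
            calc 4 ^ n * Real.exp (u ^ 2 * (1 - (1/4 : ℝ) ^ n))
                * (4 * Real.exp (u ^ 2 * (1/4 : ℝ) ^ (n+1))
                  * |g (u / 2 ^ (n+1)) - Real.cosh (u / 2 ^ (n+1))|)
                = 4 ^ (n+1) * (Real.exp (u ^ 2 * (1 - (1/4 : ℝ) ^ n))
                  * Real.exp (u ^ 2 * (1/4 : ℝ) ^ (n+1)))
                  * |g (u / 2 ^ (n+1)) - Real.cosh (u / 2 ^ (n+1))| := by ring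
              _ ≤ _ := by
                  apply mul_le_mul_of_nonneg_right _ (abs_nonneg _)
                  apply mul_le_mul_of_nonneg_left hexp (by positivity)
  -- tail: the sequence u/2^n tends to 0 within ≠ 0
  have htail : Tendsto (fun n : ℕ => u / 2 ^ n) atTop (𝓝[≠] (0:ℝ)) := by
    rw [tendsto_nhdsWithin_iff]
    constructor
    · have h := (tendsto_pow_atTop_nhds_zero_of_lt_one
        (by norm_num : (0:ℝ) ≤ 1/2) (by norm_num : (1/2 : ℝ) < 1)).const_mul u
      simp only [mul_zero] at h
      refine h.congr fun n => ?_
      rw [div_pow, one_pow]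
      ring
    · exact Eventually.of_forall fun n => huk0 n
  -- conclude g u = cosh u
  have hdu : g u = Real.cosh u := by
    have hkey : ∀ ε : ℝ, 0 < ε → |g u - Real.cosh u| ≤ Real.exp (u ^ 2) * u ^ 2 * ε := by
      intro ε hε
      have hcomp := hd0.comp htail
      rw [Metric.tendsto_atTop] at hcomp
      obtain ⟨N, hN⟩ := hcomp ε hε
      have hNN := hN N le_rfl
      rw [Real.dist_eq, sub_zero] at hNN
      simp only [Function.comp] at hNN
      have hsq : (0:ℝ) < (u / 2 ^ N) ^ 2 := by positivity
      have hdN : |g (u / 2 ^ N) - Real.cosh (u / 2 ^ N)| ≤ ε * (u / 2 ^ N) ^ 2 := by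
        rw [abs_div] at hNN
        rw [abs_of_pos hsq] at hNN
        have := (div_lt_iff₀ hsq).mp hNN
        linarith [this]
      have hsq2 : (u / 2 ^ N) ^ 2 = u ^ 2 / 4 ^ N := by
        have h4 : ((2:ℝ) ^ N) ^ 2 = 4 ^ N := by
          rw [← pow_mul, mul_comm, pow_mul]; norm_num
        rw [div_pow, h4]
      calc |g u - Real.cosh u|
          ≤ 4 ^ N * Real.exp (u ^ 2 * (1 - (1/4 : ℝ) ^ N))
            * |g (u / 2 ^ N) - Real.cosh (u / 2 ^ N)| := hacc N
        _ ≤ 4 ^ N * Real.exp (u ^ 2) * (ε * (u ^ 2 / 4 ^ N)) := by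
            rw [← hsq2]
            apply mul_le_mul
            · apply mul_le_mul_of_nonneg_left _ (by positivity)
              apply Real.exp_le_exp.mpr
              nlinarith [sq_nonneg u, pow_nonneg (by norm_num : (0:ℝ) ≤ 1/4) N]
            · exact hdN
            · exact abs_nonneg _
            · positivity
        _ = Real.exp (u ^ 2) * u ^ 2 * ε := by
            field_simp
    have hC : (0:ℝ) < Real.exp (u ^ 2) * u ^ 2 := by positivity
    have : |g u - Real.cosh u| ≤ 0 := by
      apply le_of_forall_pos_le_add
      intro ε hε
      have := hkey (ε / (Real.exp (u ^ 2) * u ^ 2)) (by positivity)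
      rw [zero_add]
      calc |g u - Real.cosh u|
          ≤ Real.exp (u ^ 2) * u ^ 2 * (ε / (Real.exp (u ^ 2) * u ^ 2)) := this
        _ = ε := by field_simp
    have := abs_nonneg (g u - Real.cosh u)
    have h0' : |g u - Real.cosh u| = 0 := le_antisymm ‹_› ‹_›
    rw [abs_eq_zero, sub_eq_zero] at h0'
    exact h0'
  -- climb back up
  have hclimb : ∀ j : ℕ, g (u * 2 ^ j) = Real.cosh (u * 2 ^ j) := by
    intro j
    induction j with
    | zero => simpa using hdu
    | succ j ih =>
      have h2 : u * 2 ^ (j+1) = 2 * (u * 2 ^ j) := by rw [pow_succ]; ring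
      rw [h2]
      have := hrec (u * 2 ^ j)
      rw [ih, sub_self, mul_zero] at this
      linarith [this]
  have hut : u * 2 ^ m = t := by
    rw [hu]; field_simp
  have := hclimb m
  rwa [hut] at this

theorem stmt_12 (F : ℝ → ℝ)
    (h1 : F 1 = 0)
    (hd : ∀ x y : ℝ, 0 < x → 0 < y →
      F (x * y) + F (x / y) = 2 * F x * F y + 2 * F x + 2 * F y)
    (hlim : Tendsto (fun t : ℝ => 2 * F (Real.exp t) / t ^ 2) (𝓝[≠] 0) (𝓝 1)) :
    ∀ x : ℝ, 0 < x → F x = (x + 1 / x) / 2 - 1 := by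
  set g : ℝ → ℝ := fun t => F (Real.exp t) + 1 with hg
  have h0 : g 0 = 1 := by simp [hg, h1]
  have hD : ∀ s t : ℝ, g (s + t) + g (s - t) = 2 * g s * g t := by
    intro s t
    have h := hd (Real.exp s) (Real.exp t) (Real.exp_pos s) (Real.exp_pos t)
    rw [← Real.exp_add, ← Real.exp_sub] at h
    simp only [hg]
    nlinarith [h]
  have hL : Tendsto (fun s : ℝ => 2 * (g s - 1) / s ^ 2) (𝓝[≠] 0) (𝓝 1) := by
    refine hlim.congr fun s => ?_
    simp [hg]
  have hgc := dAlembert_eq_cosh g h0 hD hL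
  intro x hx
  have hx' := hgc (Real.log x)
  simp only [hg] at hx'
  rw [Real.exp_log hx] at hx'
  rw [Real.cosh_log hx] at hx'
  rw [one_div]
  linarith [hx']
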